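/- Let Ω_0 := ℝ×ω ⊆ ℝ^d be the straight tube. Then λ1(Ω_0) = λ1(ω), i.e., the spectral threshold of the straight tube equals the spectral threshold of its cross-section. -/

import Mathlib

open MeasureTheory Set Filter

noncomputable section

abbrev E (m : ℕ) := EuclideanSpace ℝ (Fin m)

/-- The spectral threshold `λ₁(Ω)` of an open set `Ω ⊆ ℝ^m`: the infimum of the
Rayleigh quotient `(∫_Ω |∇u|^p)/(∫_Ω |u|^p)` over nonzero smooth compactly
supported functions `u` with support in `Ω`. -/
def lam1 (p : ℝ) {m : ℕ} (Ω : Set (E m)) : ℝ :=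
  sInf {r : ℝ | ∃ u : E m → ℝ, ContDiff ℝ (⊤ : ℕ∞) u ∧ HasCompactSupport u ∧
    tsupport u ⊆ Ω ∧ u ≠ 0 ∧
    r = (∫ x in Ω, ‖fderiv ℝ u x‖ ^ p) / (∫ x in Ω, |u x| ^ p)}

/-- The straight tube `ℝ × ω`. -/
def tube {m : ℕ} (ω : Set (E m)) : Set (ℝ × E m) := Set.univ ×ˢ ω

/-- Longitudinal partial derivative `∂_s ψ`. -/
def dS {m : ℕ} (ψ : ℝ × E m → ℝ) (x : ℝ × E m) : ℝ := fderiv ℝ ψ x (1, 0)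

/-- Transverse partial derivative `∂_{t_μ} ψ`. -/
def dT {m : ℕ} (ψ : ℝ × E m → ℝ) (x : ℝ × E m) (μ : Fin m) : ℝ :=
  fderiv ℝ ψ x (0, EuclideanSpace.single μ 1)

/-- `|∇u|^p` (Euclidean norm of the full gradient, to the power `p`) on `ℝ × ℝ^m`. -/
def gradP (p : ℝ) {m : ℕ} (u : ℝ × E m → ℝ) (x : ℝ × E m) : ℝ :=
  (dS u x ^ 2 + ∑ μ, dT u x μ ^ 2) ^ (p / 2)

/-- The spectral threshold `λ₁(Ω)` of an open subset of the product space `ℝ × ℝ^m`. -/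
def lam1Prod (p : ℝ) {m : ℕ} (Ω : Set (ℝ × E m)) : ℝ :=
  sInf {r : ℝ | ∃ u : ℝ × E m → ℝ, ContDiff ℝ (⊤ : ℕ∞) u ∧ HasCompactSupport u ∧
    tsupport u ⊆ Ω ∧ u ≠ 0 ∧
    r = (∫ x in Ω, gradP p u x) / (∫ x in Ω, |u x| ^ p)}

/-!
Slicing gives `λ₁(ω) ≤ λ₁(ℝ × ω)`: every slice `u (s, ·)` competes for `λ₁(ω)` and its
transverse gradient is dominated by the full one; integrate over `s`. Conversely, for a test
function `v` on `ω` and a fixed cutoff `χ` on `ℝ`, the convexity estimate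
`(a + b) ^ p ≤ (1 - θ) ^ (1 - p) a ^ p + θ ^ (1 - p) b ^ p` with `θ = ε` bounds the Rayleigh
quotient of `χ (ε s) v t` by `(1 - ε) ^ (1 - p) R(v) + ε Q`, because the longitudinal part
scales like `ε ^ p`; let `ε → 0`. If `ω` carries no nonzero test function, neither does the
tube, and both thresholds are the junk value `sInf ∅ = 0`.
-/

open Topology

/-- Convexity of `x ↦ x ^ p` at `(1 - θ) • (a / (1 - θ)) + θ • (b / θ) = a + b`. -/
lemma add_rpow_le_weighted {p θ a b : ℝ} (hp : 1 ≤ p) (hθ : θ ∈ Ioo (0 : ℝ) 1)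
    (ha : 0 ≤ a) (hb : 0 ≤ b) :
    (a + b) ^ p ≤ (1 - θ) ^ (1 - p) * a ^ p + θ ^ (1 - p) * b ^ p := by
  obtain ⟨hθ0, hθ1⟩ := hθ
  have h1θ : 0 < 1 - θ := by linarith
  have key := (convexOn_rpow hp).2 (x := a / (1 - θ)) (y := b / θ)
    (mem_Ici.mpr (by positivity)) (mem_Ici.mpr (by positivity)) h1θ.le hθ0.le (by ring)
  have hsum : (1 - θ) • (a / (1 - θ)) + θ • (b / θ) = a + b := by
    simp only [smul_eq_mul]
    field_simp
  rw [hsum] at key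
  refine key.trans_eq ?_
  dsimp only
  rw [smul_eq_mul, smul_eq_mul, Real.div_rpow ha h1θ.le, Real.div_rpow hb hθ0.le,
    Real.rpow_sub h1θ, Real.rpow_sub hθ0, Real.rpow_one, Real.rpow_one]
  have : 0 < (1 - θ) ^ p := Real.rpow_pos_of_pos h1θ p
  have : 0 < θ ^ p := Real.rpow_pos_of_pos hθ0 p
  field_simp

lemma sq_add_sq_rpow_half_le {p : ℝ} (hp : 0 ≤ p) (x y : ℝ) :
    (x ^ 2 + y ^ 2) ^ (p / 2) ≤ (|x| + |y|) ^ p := by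
  have hxy : x ^ 2 + y ^ 2 ≤ (|x| + |y|) ^ 2 := by
    nlinarith [sq_abs x, sq_abs y, mul_nonneg (abs_nonneg x) (abs_nonneg y)]
  calc (x ^ 2 + y ^ 2) ^ (p / 2) ≤ ((|x| + |y|) ^ 2) ^ (p / 2) := by gcongr
    _ = (|x| + |y|) ^ p := by
      rw [← Real.rpow_natCast, ← Real.rpow_mul (by positivity)]
      norm_num
      ring_nf

lemma norm_sq_eq_sum_sq_apply_single {m : ℕ} (L : E m →L[ℝ] ℝ) :
    ‖L‖ ^ 2 = ∑ μ, L (EuclideanSpace.single μ 1) ^ 2 := by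
  obtain ⟨v, rfl⟩ := (InnerProductSpace.toDual ℝ (E m)).surjective L
  simp only [LinearIsometryEquiv.norm_map, InnerProductSpace.toDual_apply_apply,
    EuclideanSpace.inner_single_right, one_mul]
  rw [EuclideanSpace.norm_eq, Real.sq_sqrt (by positivity)]
  simp [sq_abs]

section Integrability

variable {X : Type*} [TopologicalSpace X] [MeasurableSpace X] [OpensMeasurableSpace X]
  {μ : Measure X} [IsFiniteMeasureOnCompacts μ] {p : ℝ} {f : X → ℝ}

lemma HasCompactSupport.integrable_norm_rpow {F : Type*} [NormedAddCommGroup F] {g : X → F}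
    (hgs : HasCompactSupport g) (hg : Continuous g) (hp : 0 < p) :
    Integrable (fun x => ‖g x‖ ^ p) μ :=
  (hg.norm.rpow_const fun _ => Or.inr hp.le).integrable_of_hasCompactSupport
    (hgs.comp_left (g := fun y => ‖y‖ ^ p) (by simp [hp.ne']))

lemma HasCompactSupport.integrable_abs_rpow (hfs : HasCompactSupport f) (hf : Continuous f)
    (hp : 0 < p) : Integrable (fun x => |f x| ^ p) μ := by
  simpa only [Real.norm_eq_abs] using hfs.integrable_norm_rpow hf hp

lemma HasCompactSupport.integral_abs_rpow_pos [μ.IsOpenPosMeasure] (hfs : HasCompactSupport f)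
    (hf : Continuous f) (hp : 0 < p) (hf0 : f ≠ 0) : 0 < ∫ x, |f x| ^ p ∂μ := by
  have hsupp : Function.support (fun x => |f x| ^ p) = Function.support f := by
    ext x
    simp [hp.ne']
  rw [integral_pos_iff_support_of_nonneg (fun x => by positivity) (hfs.integrable_abs_rpow hf hp),
    hsupp]
  obtain ⟨x, hx⟩ := Function.ne_iff.mp hf0
  exact hf.isOpen_support.measure_pos μ ⟨x, hx⟩

end Integrability

/-- Nonzero test functions on `Ω`: the competitors in `lam1` and `lam1Prod`. -/
def IsAdmissible {X : Type*} [NormedAddCommGroup X] [NormedSpace ℝ X] (Ω : Set X)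
    (u : X → ℝ) : Prop :=
  ContDiff ℝ (⊤ : ℕ∞) u ∧ HasCompactSupport u ∧ tsupport u ⊆ Ω ∧ u ≠ 0

lemma exists_isAdmissible {X : Type*} [NormedAddCommGroup X] [NormedSpace ℝ X]
    [FiniteDimensional ℝ X] {Ω : Set X} (hΩ : IsOpen Ω) (hne : Ω.Nonempty) :
    ∃ u : X → ℝ, IsAdmissible Ω u := by
  obtain ⟨x, hx⟩ := hne
  obtain ⟨u, huΩ, hus, hu, -, hux⟩ :=
    exists_contDiff_tsupport_subset (n := (⊤ : ℕ∞)) (hΩ.mem_nhds hx)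
  exact ⟨u, hu, hus, huΩ, fun h => by simp [h] at hux⟩

def rayleigh (p : ℝ) {m : ℕ} (u : E m → ℝ) : ℝ :=
  (∫ x, ‖fderiv ℝ u x‖ ^ p) / ∫ x, |u x| ^ p

def rayleighProd (p : ℝ) {m : ℕ} (u : ℝ × E m → ℝ) : ℝ :=
  (∫ x, gradP p u x) / ∫ x, |u x| ^ p

section Threshold

variable {m : ℕ} {p : ℝ}

lemma abs_rpow_eq_zero_of_notMem_tsupport {X : Type*} [TopologicalSpace X] {u : X → ℝ} {x : X}
    (hp : 0 < p) (hx : x ∉ tsupport u) : |u x| ^ p = 0 := by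
  simp [image_eq_zero_of_notMem_tsupport hx, hp.ne']

lemma gradP_eq_zero_of_notMem_tsupport {u : ℝ × E m → ℝ} {x : ℝ × E m} (hp : 0 < p)
    (hx : x ∉ tsupport u) : gradP p u x = 0 := by
  simp [gradP, dS, dT, fderiv_of_notMem_tsupport ℝ hx, hp.ne']

lemma gradP_nonneg (u : ℝ × E m → ℝ) (x : ℝ × E m) : 0 ≤ gradP p u x := by
  unfold gradP
  positivity

lemma rayleigh_nonneg (u : E m → ℝ) : 0 ≤ rayleigh p u :=
  div_nonneg (integral_nonneg fun _ => by positivity) (integral_nonneg fun _ => by positivity)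

lemma rayleighProd_nonneg (u : ℝ × E m → ℝ) : 0 ≤ rayleighProd p u :=
  div_nonneg (integral_nonneg (gradP_nonneg u)) (integral_nonneg fun _ => by positivity)

lemma rayleigh_eq_div_setIntegral {Ω : Set (E m)} {u : E m → ℝ} (hp : 0 < p)
    (huΩ : tsupport u ⊆ Ω) :
    rayleigh p u = (∫ x in Ω, ‖fderiv ℝ u x‖ ^ p) / ∫ x in Ω, |u x| ^ p := by
  rw [rayleigh, setIntegral_eq_integral_of_forall_compl_eq_zero,
    setIntegral_eq_integral_of_forall_compl_eq_zero]
  · exact fun x hx => abs_rpow_eq_zero_of_notMem_tsupport hp fun h => hx (huΩ h)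
  · intro x hx
    simp [fderiv_of_notMem_tsupport ℝ fun h => hx (huΩ h), hp.ne']

lemma rayleighProd_eq_div_setIntegral {Ω : Set (ℝ × E m)} {u : ℝ × E m → ℝ} (hp : 0 < p)
    (huΩ : tsupport u ⊆ Ω) :
    rayleighProd p u = (∫ x in Ω, gradP p u x) / ∫ x in Ω, |u x| ^ p := by
  rw [rayleighProd, setIntegral_eq_integral_of_forall_compl_eq_zero,
    setIntegral_eq_integral_of_forall_compl_eq_zero]
  · exact fun x hx => abs_rpow_eq_zero_of_notMem_tsupport hp fun h => hx (huΩ h)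
  · exact fun x hx => gradP_eq_zero_of_notMem_tsupport hp fun h => hx (huΩ h)

lemma lam1_eq_sInf_rayleigh (hp : 0 < p) (Ω : Set (E m)) :
    lam1 p Ω = sInf (rayleigh p '' {u | IsAdmissible Ω u}) := by
  unfold lam1
  congr 1
  ext r
  constructor
  · rintro ⟨u, hu, hus, huΩ, hu0, rfl⟩
    exact ⟨u, ⟨hu, hus, huΩ, hu0⟩, rayleigh_eq_div_setIntegral hp huΩ⟩
  · rintro ⟨u, ⟨hu, hus, huΩ, hu0⟩, rfl⟩
    exact ⟨u, hu, hus, huΩ, hu0, rayleigh_eq_div_setIntegral hp huΩ⟩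

lemma lam1Prod_eq_sInf_rayleighProd (hp : 0 < p) (Ω : Set (ℝ × E m)) :
    lam1Prod p Ω = sInf (rayleighProd p '' {u | IsAdmissible Ω u}) := by
  unfold lam1Prod
  congr 1
  ext r
  constructor
  · rintro ⟨u, hu, hus, huΩ, hu0, rfl⟩
    exact ⟨u, ⟨hu, hus, huΩ, hu0⟩, rayleighProd_eq_div_setIntegral hp huΩ⟩
  · rintro ⟨u, ⟨hu, hus, huΩ, hu0⟩, rfl⟩
    exact ⟨u, hu, hus, huΩ, hu0, rayleighProd_eq_div_setIntegral hp huΩ⟩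

lemma lam1_le_rayleigh {Ω : Set (E m)} {u : E m → ℝ} (hp : 0 < p) (hu : IsAdmissible Ω u) :
    lam1 p Ω ≤ rayleigh p u := by
  rw [lam1_eq_sInf_rayleigh hp]
  exact csInf_le ⟨0, forall_mem_image.2 fun u _ => rayleigh_nonneg u⟩ (mem_image_of_mem _ hu)

lemma lam1Prod_le_rayleighProd {Ω : Set (ℝ × E m)} {u : ℝ × E m → ℝ} (hp : 0 < p)
    (hu : IsAdmissible Ω u) : lam1Prod p Ω ≤ rayleighProd p u := by
  rw [lam1Prod_eq_sInf_rayleighProd hp]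
  exact csInf_le ⟨0, forall_mem_image.2 fun u _ => rayleighProd_nonneg u⟩
    (mem_image_of_mem _ hu)

end Threshold

section Slice

variable {m : ℕ} {p : ℝ} {ω : Set (E m)} {u : ℝ × E m → ℝ}

lemma ContDiff.slice {n : WithTop ℕ∞} (hu : ContDiff ℝ n u) (s : ℝ) :
    ContDiff ℝ n fun t => u (s, t) :=
  hu.comp (contDiff_const.prodMk contDiff_id)

lemma tsupport_slice_subset (s : ℝ) :
    tsupport (fun t => u (s, t)) ⊆ Prod.mk s ⁻¹' tsupport u :=
  tsupport_comp_subset_preimage u (Continuous.prodMk_right s)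

lemma HasCompactSupport.slice (hus : HasCompactSupport u) (s : ℝ) :
    HasCompactSupport fun t => u (s, t) :=
  (hus.image continuous_snd).of_isClosed_subset (isClosed_tsupport _)
    fun t ht => ⟨(s, t), tsupport_slice_subset s ht, rfl⟩

lemma tsupport_slice_subset_of_tube (huω : tsupport u ⊆ tube ω) (s : ℝ) :
    tsupport (fun t => u (s, t)) ⊆ ω :=
  fun _ ht => (huω (tsupport_slice_subset s ht)).2

lemma fderiv_slice_apply_single (hu : Differentiable ℝ u) (s : ℝ) (t : E m) (μ : Fin m) :
    fderiv ℝ (fun t => u (s, t)) t (EuclideanSpace.single μ 1) = dT u (s, t) μ := by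
  have hincl : HasFDerivAt (Prod.mk s) (ContinuousLinearMap.inr ℝ ℝ (E m)) t :=
    (hasFDerivAt_const s t).prodMk (hasFDerivAt_id t)
  rw [show (fun t => u (s, t)) = u ∘ Prod.mk s from rfl,
    ((hu (s, t)).hasFDerivAt.comp t hincl).fderiv]
  rfl

lemma norm_fderiv_slice_rpow_le_gradP (hp : 0 ≤ p) (hu : Differentiable ℝ u) (s : ℝ)
    (t : E m) : ‖fderiv ℝ (fun t => u (s, t)) t‖ ^ p ≤ gradP p u (s, t) := by
  have hsq := norm_sq_eq_sum_sq_apply_single (fderiv ℝ (fun t => u (s, t)) t)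
  simp only [fderiv_slice_apply_single hu] at hsq
  calc ‖fderiv ℝ (fun t => u (s, t)) t‖ ^ p
      = (‖fderiv ℝ (fun t => u (s, t)) t‖ ^ 2) ^ (p / 2) := by
        rw [← Real.rpow_natCast, ← Real.rpow_mul (norm_nonneg _)]
        ring_nf
    _ ≤ gradP p u (s, t) := by
        rw [hsq, gradP]
        gcongr
        exact le_add_of_nonneg_left (sq_nonneg _)

lemma gradP_integrable (hp : 0 < p) (hu : ContDiff ℝ 1 u) (hus : HasCompactSupport u) :
    Integrable (gradP p u) := by
  let G : (ℝ × E m →L[ℝ] ℝ) → ℝ := fun L =>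
    (L (1, 0) ^ 2 + ∑ μ, L (0, EuclideanSpace.single μ 1) ^ 2) ^ (p / 2)
  have hG : Continuous G := by
    refine Continuous.rpow_const (by fun_prop) fun _ => Or.inr (by positivity)
  have hcont : Continuous (G ∘ fderiv ℝ u) := hG.comp (hu.continuous_fderiv one_ne_zero)
  exact hcont.integrable_of_hasCompactSupport
    (hus.fderiv (𝕜 := ℝ) |>.comp_left (g := G) (by simp [G, hp.ne']))

lemma lam1_mul_integral_le {Ω : Set (E m)} {v : E m → ℝ} (hp : 0 < p)
    (hv : ContDiff ℝ (⊤ : ℕ∞) v) (hvs : HasCompactSupport v) (hvΩ : tsupport v ⊆ Ω) :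
    lam1 p Ω * ∫ x, |v x| ^ p ≤ ∫ x, ‖fderiv ℝ v x‖ ^ p := by
  by_cases hv0 : v = 0
  · subst hv0
    simp only [Pi.zero_apply, abs_zero, Real.zero_rpow hp.ne', integral_zero, mul_zero]
    exact integral_nonneg fun _ => by positivity
  · rw [← le_div_iff₀ (hvs.integral_abs_rpow_pos hv.continuous hp hv0)]
    exact lam1_le_rayleigh hp ⟨hv, hvs, hvΩ, hv0⟩

lemma lam1_le_rayleighProd (hp : 0 < p) (hu : IsAdmissible (tube ω) u) :
    lam1 p ω ≤ rayleighProd p u := by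
  obtain ⟨hu, hus, huω, hu0⟩ := hu
  rw [rayleighProd, le_div_iff₀ (hus.integral_abs_rpow_pos hu.continuous hp hu0)]
  have hIu : Integrable (fun x => |u x| ^ p) ((volume : Measure ℝ).prod volume) :=
    hus.integrable_abs_rpow hu.continuous hp
  have hIg : Integrable (gradP p u) ((volume : Measure ℝ).prod volume) :=
    gradP_integrable hp (hu.of_le (by simp)) hus
  rw [Measure.volume_eq_prod, integral_prod _ hIu, integral_prod _ hIg, ← integral_const_mul]
  refine integral_mono_ae (hIu.integral_prod_left.const_mul _) hIg.integral_prod_left ?_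
  filter_upwards [hIg.prod_right_ae] with s hs
  calc lam1 p ω * ∫ t, |u (s, t)| ^ p ≤ ∫ t, ‖fderiv ℝ (fun t => u (s, t)) t‖ ^ p :=
        lam1_mul_integral_le hp (hu.slice s) (hus.slice s) (tsupport_slice_subset_of_tube huω s)
    _ ≤ ∫ t, gradP p u (s, t) :=
        integral_mono_of_nonneg (ae_of_all _ fun _ => by positivity) hs (ae_of_all _
          fun t => norm_fderiv_slice_rpow_le_gradP hp.le (hu.differentiable (by simp)) s t)

lemma exists_isAdmissible_slice (hu : IsAdmissible (tube ω) u) :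
    ∃ s, IsAdmissible ω fun t => u (s, t) := by
  obtain ⟨hu, hus, huω, hu0⟩ := hu
  obtain ⟨⟨s, t⟩, hst⟩ := Function.ne_iff.mp hu0
  exact ⟨s, hu.slice s, hus.slice s, tsupport_slice_subset_of_tube huω s,
    Function.ne_iff.mpr ⟨t, hst⟩⟩

end Slice

section Product

variable {m : ℕ} {p θ : ℝ} {ω : Set (E m)} {f : ℝ → ℝ} {v : E m → ℝ}

lemma hasFDerivAt_mul_prod {s : ℝ} {t : E m} (hf : DifferentiableAt ℝ f s)
    (hv : DifferentiableAt ℝ v t) :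
    HasFDerivAt (fun x : ℝ × E m => f x.1 * v x.2)
      (f s • (fderiv ℝ v t).comp (ContinuousLinearMap.snd ℝ ℝ (E m)) +
        v t • ((1 : ℝ →L[ℝ] ℝ).smulRight (deriv f s)).comp
          (ContinuousLinearMap.fst ℝ ℝ (E m)))
      (s, t) := by
  have hf' : HasFDerivAt (fun x : ℝ × E m => f x.1)
      (((1 : ℝ →L[ℝ] ℝ).smulRight (deriv f s)).comp (ContinuousLinearMap.fst ℝ ℝ (E m)))
      (s, t) :=
    hf.hasDerivAt.hasFDerivAt.comp (s, t) hasFDerivAt_fst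
  have hv' : HasFDerivAt (fun x : ℝ × E m => v x.2)
      ((fderiv ℝ v t).comp (ContinuousLinearMap.snd ℝ ℝ (E m))) (s, t) :=
    hv.hasFDerivAt.comp (s, t) hasFDerivAt_snd
  exact hf'.mul hv'

lemma dS_mul_prod {s : ℝ} {t : E m} (hf : DifferentiableAt ℝ f s)
    (hv : DifferentiableAt ℝ v t) :
    dS (fun x : ℝ × E m => f x.1 * v x.2) (s, t) = deriv f s * v t := by
  simp [dS, (hasFDerivAt_mul_prod hf hv).fderiv, mul_comm]

lemma dT_mul_prod {s : ℝ} {t : E m} (hf : DifferentiableAt ℝ f s)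
    (hv : DifferentiableAt ℝ v t) (μ : Fin m) :
    dT (fun x : ℝ × E m => f x.1 * v x.2) (s, t) μ =
      f s * fderiv ℝ v t (EuclideanSpace.single μ 1) := by
  simp [dT, (hasFDerivAt_mul_prod hf hv).fderiv]

lemma gradP_mul_prod_le (hp : 1 ≤ p) (hθ : θ ∈ Ioo (0 : ℝ) 1) (hf : Differentiable ℝ f)
    (hv : Differentiable ℝ v) (s : ℝ) (t : E m) :
    gradP p (fun x : ℝ × E m => f x.1 * v x.2) (s, t) ≤
      (1 - θ) ^ (1 - p) * (|f s| ^ p * ‖fderiv ℝ v t‖ ^ p) +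
        θ ^ (1 - p) * (|deriv f s| ^ p * |v t| ^ p) := by
  have htrans : ∑ μ, dT (fun x : ℝ × E m => f x.1 * v x.2) (s, t) μ ^ 2 =
      (f s * ‖fderiv ℝ v t‖) ^ 2 := by
    simp only [dT_mul_prod (hf s) (hv t), mul_pow, ← Finset.mul_sum,
      ← norm_sq_eq_sum_sq_apply_single]
  calc gradP p (fun x : ℝ × E m => f x.1 * v x.2) (s, t)
      = ((f s * ‖fderiv ℝ v t‖) ^ 2 + (deriv f s * v t) ^ 2) ^ (p / 2) := by
        rw [gradP, htrans, dS_mul_prod (hf s) (hv t), add_comm]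
    _ ≤ (|f s * ‖fderiv ℝ v t‖| + |deriv f s * v t|) ^ p :=
        sq_add_sq_rpow_half_le (by linarith) _ _
    _ ≤ (1 - θ) ^ (1 - p) * |f s * ‖fderiv ℝ v t‖| ^ p +
          θ ^ (1 - p) * |deriv f s * v t| ^ p :=
        add_rpow_le_weighted hp hθ (abs_nonneg _) (abs_nonneg _)
    _ = _ := by
        simp only [abs_mul, abs_norm, Real.mul_rpow (abs_nonneg _) (abs_nonneg _),
          Real.mul_rpow (abs_nonneg _) (norm_nonneg _)]

lemma isAdmissible_mul_prod (hf : IsAdmissible univ f) (hv : IsAdmissible ω v) :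
    IsAdmissible (tube ω) fun x : ℝ × E m => f x.1 * v x.2 := by
  obtain ⟨hf, hfs, -, hf0⟩ := hf
  obtain ⟨hv, hvs, hvω, hv0⟩ := hv
  have hsupp : Function.support (fun x : ℝ × E m => f x.1 * v x.2) ⊆
      tsupport f ×ˢ tsupport v := fun x hx =>
    ⟨subset_tsupport f (left_ne_zero_of_mul hx), subset_tsupport v (right_ne_zero_of_mul hx)⟩
  obtain ⟨s, hs⟩ := Function.ne_iff.mp hf0
  obtain ⟨t, ht⟩ := Function.ne_iff.mp hv0
  refine ⟨(hf.comp contDiff_fst).mul (hv.comp contDiff_snd), ?_, ?_,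
    Function.ne_iff.mpr ⟨(s, t), mul_ne_zero hs ht⟩⟩
  · exact (hfs.prod hvs).of_isClosed_subset (isClosed_tsupport _)
      (closure_minimal hsupp ((isClosed_tsupport f).prod (isClosed_tsupport v)))
  · exact (closure_minimal hsupp ((isClosed_tsupport f).prod (isClosed_tsupport v))).trans
      (prod_mono (subset_univ _) hvω)

lemma integral_abs_rpow_mul_prod :
    ∫ x : ℝ × E m, |f x.1 * v x.2| ^ p = (∫ s, |f s| ^ p) * ∫ t, |v t| ^ p := by
  simp only [abs_mul, Real.mul_rpow (abs_nonneg _) (abs_nonneg _)]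
  exact integral_prod_mul (fun s => |f s| ^ p) (fun t => |v t| ^ p)

lemma integral_gradP_mul_prod_le (hp : 1 ≤ p) (hθ : θ ∈ Ioo (0 : ℝ) 1)
    (hf : IsAdmissible univ f) (hv : IsAdmissible ω v) :
    ∫ x, gradP p (fun x : ℝ × E m => f x.1 * v x.2) x ≤
      (1 - θ) ^ (1 - p) * ((∫ s, |f s| ^ p) * ∫ t, ‖fderiv ℝ v t‖ ^ p) +
        θ ^ (1 - p) * ((∫ s, |deriv f s| ^ p) * ∫ t, |v t| ^ p) := by
  have hp0 : 0 < p := by linarith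
  have hu := isAdmissible_mul_prod hf hv
  obtain ⟨hf, hfs, -, -⟩ := hf
  obtain ⟨hv, hvs, -, -⟩ := hv
  have hI1 : Integrable (fun x : ℝ × E m => |f x.1| ^ p * ‖fderiv ℝ v x.2‖ ^ p) :=
    (hfs.integrable_abs_rpow hf.continuous hp0).mul_prod
      (hvs.fderiv (𝕜 := ℝ) |>.integrable_norm_rpow (hv.continuous_fderiv (by simp)) hp0)
  have hI2 : Integrable (fun x : ℝ × E m => |deriv f x.1| ^ p * |v x.2| ^ p) :=
    (hfs.deriv.integrable_abs_rpow (hf.continuous_deriv (by simp)) hp0).mul_prod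
      (hvs.integrable_abs_rpow hv.continuous hp0)
  calc ∫ x, gradP p (fun x : ℝ × E m => f x.1 * v x.2) x
      ≤ ∫ x : ℝ × E m, ((1 - θ) ^ (1 - p) * (|f x.1| ^ p * ‖fderiv ℝ v x.2‖ ^ p) +
          θ ^ (1 - p) * (|deriv f x.1| ^ p * |v x.2| ^ p)) :=
        integral_mono (gradP_integrable hp0 (hu.1.of_le (by simp)) hu.2.1)
          ((hI1.const_mul _).add (hI2.const_mul _))
          fun x => gradP_mul_prod_le hp hθ (hf.differentiable (by simp))
            (hv.differentiable (by simp)) x.1 x.2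
    _ = _ := by
        rw [integral_add (hI1.const_mul _) (hI2.const_mul _), integral_const_mul,
          integral_const_mul]
        congr 2
        · exact integral_prod_mul (fun s => |f s| ^ p) (fun t => ‖fderiv ℝ v t‖ ^ p)
        · exact integral_prod_mul (fun s => |deriv f s| ^ p) (fun t => |v t| ^ p)

lemma rayleighProd_mul_prod_le (hp : 1 ≤ p) (hθ : θ ∈ Ioo (0 : ℝ) 1)
    (hf : IsAdmissible univ f) (hv : IsAdmissible ω v) :
    rayleighProd p (fun x : ℝ × E m => f x.1 * v x.2) ≤
      (1 - θ) ^ (1 - p) * rayleigh p v +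
        θ ^ (1 - p) * ((∫ s, |deriv f s| ^ p) / ∫ s, |f s| ^ p) := by
  have hp0 : 0 < p := by linarith
  have hC := hf.2.1.integral_abs_rpow_pos (μ := volume) hf.1.continuous hp0 hf.2.2.2
  have hB := hv.2.1.integral_abs_rpow_pos (μ := volume) hv.1.continuous hp0 hv.2.2.2
  rw [rayleighProd, integral_abs_rpow_mul_prod, div_le_iff₀ (mul_pos hC hB)]
  refine (integral_gradP_mul_prod_le hp hθ hf hv).trans_eq ?_
  rw [rayleigh]
  field_simp

end Product

section Scaling

variable {p ε : ℝ} {f : ℝ → ℝ}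

lemma IsAdmissible.comp_mul_left (hf : IsAdmissible univ f) (hε : ε ≠ 0) :
    IsAdmissible univ fun s => f (ε * s) := by
  obtain ⟨hf, hfs, -, hf0⟩ := hf
  obtain ⟨s, hs⟩ := Function.ne_iff.mp hf0
  refine ⟨hf.comp (contDiff_const.mul contDiff_id), ?_, subset_univ _,
    Function.ne_iff.mpr ⟨ε⁻¹ * s, by simpa [mul_inv_cancel_left₀ hε]⟩⟩
  exact hfs.comp_isClosedEmbedding (Homeomorph.mulLeft₀ ε hε).isClosedEmbedding

lemma div_integral_comp_mul_left (hε : 0 < ε) :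
    (∫ s, |deriv (fun s => f (ε * s)) s| ^ p) / ∫ s, |f (ε * s)| ^ p =
      ε ^ p * ((∫ s, |deriv f s| ^ p) / ∫ s, |f s| ^ p) := by
  have hderiv : ∀ s, |deriv (fun s => f (ε * s)) s| ^ p = ε ^ p * |deriv f (ε * s)| ^ p := by
    intro s
    rw [show (fun s => f (ε * s)) = (f <| ε * ·) from rfl, deriv_comp_mul_left, smul_eq_mul,
      abs_mul, Real.mul_rpow (abs_nonneg _) (abs_nonneg _), abs_of_pos hε]
  simp_rw [hderiv]
  rw [integral_const_mul, Measure.integral_comp_mul_left (fun s => |deriv f s| ^ p),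
    Measure.integral_comp_mul_left (fun s => |f s| ^ p), smul_eq_mul, smul_eq_mul,
    mul_left_comm, mul_div_mul_left _ _ (by positivity), mul_div_assoc]

end Scaling

lemma lam1Prod_tube_le_rayleigh {m : ℕ} {p : ℝ} {ω : Set (E m)} {v : E m → ℝ}
    (hp : 1 ≤ p) (hv : IsAdmissible ω v) : lam1Prod p (tube ω) ≤ rayleigh p v := by
  obtain ⟨χ, hχ⟩ := exists_isAdmissible (X := ℝ) isOpen_univ univ_nonempty
  set Q := (∫ s, |deriv χ s| ^ p) / ∫ s, |χ s| ^ p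
  have hbound : ∀ ε ∈ Ioo (0 : ℝ) 1,
      lam1Prod p (tube ω) ≤ (1 - ε) ^ (1 - p) * rayleigh p v + ε * Q := by
    intro ε hε
    have hχε := hχ.comp_mul_left hε.1.ne'
    calc lam1Prod p (tube ω) ≤ rayleighProd p fun x : ℝ × E m => χ (ε * x.1) * v x.2 :=
          lam1Prod_le_rayleighProd (by linarith) (isAdmissible_mul_prod hχε hv)
      _ ≤ (1 - ε) ^ (1 - p) * rayleigh p v + ε ^ (1 - p) * (ε ^ p * Q) := by
          have h := rayleighProd_mul_prod_le hp hε hχε hv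
          rwa [div_integral_comp_mul_left hε.1] at h
      _ = (1 - ε) ^ (1 - p) * rayleigh p v + ε * Q := by
          rw [← mul_assoc, ← Real.rpow_add hε.1, sub_add_cancel, Real.rpow_one]
  have hcont : ContinuousAt (fun ε : ℝ => (1 - ε) ^ (1 - p) * rayleigh p v + ε * Q) 0 :=
    ((continuousAt_const.sub continuousAt_id).rpow_const (Or.inl (by simp))).mul
      continuousAt_const |>.add (continuousAt_id.mul continuousAt_const)
  have hlim : Tendsto (fun ε : ℝ => (1 - ε) ^ (1 - p) * rayleigh p v + ε * Q) (𝓝[>] 0)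
      (𝓝 (rayleigh p v)) := by
    simpa using hcont.tendsto.mono_left nhdsWithin_le_nhds
  exact ge_of_tendsto hlim (eventually_of_mem (Ioo_mem_nhdsGT one_pos) hbound)

theorem stmt_2_general {m : ℕ} (p : ℝ) (hp : 1 < p)
    (ω : Set (E m)) :
    lam1Prod p (tube ω) = lam1 p ω := by
  have hp0 : 0 < p := by linarith
  rw [lam1Prod_eq_sInf_rayleighProd hp0, lam1_eq_sInf_rayleigh hp0]
  by_cases hω : ∃ v, IsAdmissible ω v
  · obtain ⟨v, hv⟩ := hω
    obtain ⟨χ, hχ⟩ := exists_isAdmissible (X := ℝ) isOpen_univ univ_nonempty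
    apply le_antisymm
    · refine le_csInf ⟨_, mem_image_of_mem _ hv⟩ (forall_mem_image.2 fun v hv => ?_)
      rw [← lam1Prod_eq_sInf_rayleighProd hp0]
      exact lam1Prod_tube_le_rayleigh hp.le hv
    · refine le_csInf ⟨_, mem_image_of_mem _ (isAdmissible_mul_prod hχ hv)⟩
        (forall_mem_image.2 fun u hu => ?_)
      rw [← lam1_eq_sInf_rayleigh hp0]
      exact lam1_le_rayleighProd hp0 hu
  · have htube : ∀ u, ¬ IsAdmissible (tube ω) u := by
      rintro u hu
      obtain ⟨s, hs⟩ := exists_isAdmissible_slice hu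
      exact hω ⟨_, hs⟩
    simp [htube, not_exists.mp hω]

/-- The spectral threshold of the straight tube `Ω₀ = ℝ × ω` equals the spectral
threshold of its cross-section `ω`. -/
theorem stmt_2 {m : ℕ} (hm : 1 ≤ m) (p : ℝ) (hp : 1 < p)
    (ω : Set (E m)) (hωopen : IsOpen ω) (hωne : ω.Nonempty)
    (hωbdd : Bornology.IsBounded ω) (hωconn : IsConnected ω) :
    lam1Prod p (tube ω) = lam1 p ω :=
  stmt_2_general p hp ω
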